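/- (Linearisation Lemma) Let P be a Horn clause program, k ∈ ℕ, and let S be any interpretation of the indexed atoms of dimension index at most k. Then the program LINEARIZE(P^{≤k+1}, S) is linear, i.e., every clause of LINEARIZE(P^{≤k+1}, S) has at most one atom in its body. -/

import Mathlib

/-!
Every clause of `P^{≤k+1}` has at most one body atom of dimension index above `k`: in a
clause of type (iii) only the `j`-th one, in a clause of type (iv) none, and clauses of the
other types have at most one body atom at all. `LINEARIZE(·, S)` deletes every body atom
of index `≤ k` from the clauses it keeps.
-/

/-- An indexed atom `a^{=d}` (when `isExact = true`) or `a^{≤d}` (when `isExact = false`),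
where `d` is the dimension index. -/
structure IAtom (β : Type) where
  atom : β
  idx : ℕ
  isExact : Bool
deriving DecidableEq

/-- A (ground) Horn clause program over atoms `γ`: a set of clauses `(head, body)`. -/
abbrev Program (γ : Type) := Set (γ × List γ)

/-- The at-most-`k`-dimension program `P^{≤k}`. -/
def kdim {β : Type} (P : Program β) (k : ℕ) : Program (IAtom β) :=
  { c |
    -- (i) fact clauses
    (∃ h, (h, ([] : List β)) ∈ P ∧ c = (⟨h, 0, true⟩, [])) ∨
    -- (ii) linear clauses
    (∃ h b d, (h, [b]) ∈ P ∧ d ≤ k ∧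
      c = (⟨h, d, true⟩, [⟨b, d, true⟩])) ∨
    -- (iii) non-linear clauses, one body atom of exact dimension d
    (∃ h B d j, (h, B) ∈ P ∧ 1 < B.length ∧ 1 ≤ d ∧ d ≤ k ∧ j < B.length ∧
      c = ((⟨h, d, true⟩ : IAtom β),
        B.mapIdx fun i b =>
          if i = j then (⟨b, d, true⟩ : IAtom β) else ⟨b, d - 1, false⟩)) ∨
    -- (iv) non-linear clauses, two body atoms of exact dimension d-1
    (∃ h B d, ∃ J : Finset ℕ, (h, B) ∈ P ∧ 1 < B.length ∧ 1 ≤ d ∧ d ≤ k ∧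
      J.card = 2 ∧ (∀ i ∈ J, i < B.length) ∧ (2 ≤ d ∨ B.length = 2) ∧
      c = ((⟨h, d, true⟩ : IAtom β),
        B.mapIdx fun i b =>
          if i ∈ J then (⟨b, d - 1, true⟩ : IAtom β) else ⟨b, d - 2, false⟩)) ∨
    -- (v) ε-clauses
    (∃ h d e, e ≤ d ∧ d ≤ k ∧
      c = ((⟨h, d, false⟩ : IAtom β), [(⟨h, e, true⟩ : IAtom β)])) }

/-- `LINEARIZE(Q, S)`: keep a clause iff every body atom of dimension index `≤ k`
belongs to `S`, deleting those body atoms from the kept clause. -/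
def linearize {β : Type} (Q : Program (IAtom β)) (k : ℕ) (S : Set (IAtom β)) :
    Program (IAtom β) :=
  { c | ∃ c' ∈ Q, (∀ a ∈ c'.2, a.idx ≤ k → a ∈ S) ∧
        c = (c'.1, c'.2.filter fun a => decide (k < a.idx)) }

namespace List

variable {α γ : Type*}

theorem filter_mapIdx_eq_nil (l : List α) (f : ℕ → α → γ) (p : γ → Bool)
    (h : ∀ i a, p (f i a) = false) : (l.mapIdx f).filter p = [] := by
  rw [filter_eq_nil_iff]
  rintro _ hb
  obtain ⟨i, hi, rfl⟩ := mem_mapIdx.mp hb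
  simp [h]

theorem length_filter_mapIdx_le_one (l : List α) (f : ℕ → α → γ) (p : γ → Bool) (j : ℕ)
    (h : ∀ i, i ≠ j → ∀ a, p (f i a) = false) : ((l.mapIdx f).filter p).length ≤ 1 := by
  induction l generalizing f j with
  | nil => simp
  | cons a l ih =>
    rw [mapIdx_cons, filter_cons]
    cases j with
    | zero =>
      have htail : (l.mapIdx fun i => f (i + 1)).filter p = [] :=
        filter_mapIdx_eq_nil l _ p fun i => h (i + 1) (by omega)
      split <;> simp [htail]
    | succ j =>
      rw [h 0 (by omega)]
      exact ih (fun i => f (i + 1)) j fun i hi => h (i + 1) (by omega)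

end List

theorem length_filter_body_idx_gt_le_one_of_mem_kdim {β : Type} {P : Program β} {k : ℕ}
    {c : IAtom β × List (IAtom β)} (hc : c ∈ kdim P (k + 1)) :
    (c.2.filter fun a => decide (k < a.idx)).length ≤ 1 := by
  rcases hc with ⟨h, -, rfl⟩ | ⟨h, b, d, -, -, rfl⟩ |
    ⟨h, B, d, j, -, -, -, hdk, -, rfl⟩ |
    ⟨h, B, d, J, -, -, -, hdk, -, -, -, rfl⟩ | ⟨h, d, e, -, -, rfl⟩
  · simp
  · exact (List.length_filter_le _ _).trans (by simp)
  · refine List.length_filter_mapIdx_le_one B _ _ j fun i hi a => ?_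
    simp only [if_neg hi, decide_eq_false_iff_not, not_lt]
    omega
  · rw [List.filter_mapIdx_eq_nil]
    · simp
    · intro i a
      split <;> simp only [decide_eq_false_iff_not, not_lt] <;> omega
  · exact (List.length_filter_le _ _).trans (by simp)

theorem linearize_linear_general {β : Type} (P : Program β) (k : ℕ)
    (S : Set (IAtom β)) :
    ∀ c ∈ linearize (kdim P (k + 1)) k S, c.2.length ≤ 1 := by
  rintro c ⟨c', hc', -, rfl⟩
  exact length_filter_body_idx_gt_le_one_of_mem_kdim hc'

/-- Linearisation Lemma: for any interpretation `S` of the indexed atoms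
of dimension index at most `k`, the program `LINEARIZE(P^{≤k+1}, S)` is linear. -/
theorem linearize_linear {β : Type} (fbl : β) (P : Program β)
    (hP : ∀ c ∈ P, fbl ∉ c.2) (k : ℕ)
    (S : Set (IAtom β)) (hS : ∀ a ∈ S, a.idx ≤ k) :
    ∀ c ∈ linearize (kdim P (k + 1)) k S, c.2.length ≤ 1 :=
  linearize_linear_general P k S
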